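/- Suppose to each location y ∈ 𝒳 is assigned a nonempty set Φ_y ⊆ 𝒳 with y ∈ Φ_y (the PLSs may intersect), let ε > 0 and Ẽ_m > 0, and suppose the obfuscation mechanism f satisfies ε-DP on each Φ_y and E(Φ_y) ≥ e^ε · Ẽ_m for every y ∈ 𝒳. Then for every observed pseudo-location x' ∈ 𝒳, min_{y∈𝒳} PivEr(Φ_y, x') ≥ Ẽ_m. -/

import Mathlib

/-!
Within a PLS `Φ`, the posterior weights renormalised to `Φ` are `π(x) f(x'|x) / ∑_{z ∈ Φ} π(z) f(x'|z)`.
By `ε`-DP on `Φ` the denominator is at most `e^ε f(x'|x) ∑_{z ∈ Φ} π(z)`, so every renormalised posterior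
weight is at least `e^{-ε}` times the renormalised prior weight. Hence for every pivot the posterior
expected error is at least `e^{-ε}` times the prior one, and `PivEr(Φ, x') ≥ e^{-ε} E(Φ) ≥ Ẽ_m`.
-/

open Finset

noncomputable section

/-- Points of the Euclidean plane. -/
abbrev Pt : Type := EuclideanSpace ℝ (Fin 2)

theorem div_sum_le_mul_div_sum_mul {α : Type*} {s : Finset α} {p g : α → ℝ} {K : ℝ}
    (hp : ∀ z ∈ s, 0 < p z) (hg : ∀ z ∈ s, 0 < g z)
    (hK : ∀ a ∈ s, ∀ b ∈ s, g a ≤ K * g b) {x : α} (hx : x ∈ s) :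
    p x / ∑ z ∈ s, p z ≤ K * (p x * g x / ∑ z ∈ s, p z * g z) := by
  have hps : 0 < ∑ z ∈ s, p z := sum_pos hp ⟨x, hx⟩
  have hpgs : 0 < ∑ z ∈ s, p z * g z := sum_pos (fun z hz => mul_pos (hp z hz) (hg z hz)) ⟨x, hx⟩
  have hsum : ∑ z ∈ s, p z * g z ≤ K * g x * ∑ z ∈ s, p z := by
    rw [mul_sum]
    refine sum_le_sum fun z hz => ?_
    nlinarith [hK z hz x hx, hp z hz]
  rw [mul_div_assoc', div_le_div_iff₀ hps hpgs]
  nlinarith [hp x hx]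

section MeanDist

variable {α : Type*} [PseudoMetricSpace α]

/-- `E(Φ) = Φ.inf' _ (meanDist π Φ)` and `PivEr(Φ, x') = Φ.inf' _ (meanDist Pr(· | x') Φ)`. -/
def meanDist (w : α → ℝ) (s : Finset α) (a : α) : ℝ :=
  ∑ x ∈ s, (w x / ∑ z ∈ s, w z) * dist a x

theorem meanDist_const_mul (w : α → ℝ) (s : Finset α) (a : α) {c : ℝ} (hc : c ≠ 0) :
    meanDist (fun x => c * w x) s a = meanDist w s a := by
  unfold meanDist
  simp only [← mul_sum, mul_div_mul_left _ _ hc]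

theorem meanDist_le_mul_meanDist_mul {s : Finset α} {p g : α → ℝ} {K : ℝ}
    (hp : ∀ z ∈ s, 0 < p z) (hg : ∀ z ∈ s, 0 < g z)
    (hK : ∀ a ∈ s, ∀ b ∈ s, g a ≤ K * g b) (a : α) :
    meanDist p s a ≤ K * meanDist (fun x => p x * g x) s a := by
  unfold meanDist
  rw [mul_sum]
  refine sum_le_sum fun x hx => ?_
  rw [← mul_assoc]
  exact mul_le_mul_of_nonneg_right (div_sum_le_mul_div_sum_mul hp hg hK hx) dist_nonneg

theorem inf'_meanDist_le_mul_inf'_meanDist_mul {s : Finset α} (hs : s.Nonempty) {p g : α → ℝ}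
    {K : ℝ} (hp : ∀ z ∈ s, 0 < p z) (hg : ∀ z ∈ s, 0 < g z)
    (hK : ∀ a ∈ s, ∀ b ∈ s, g a ≤ K * g b) :
    s.inf' hs (meanDist p s) ≤ K * s.inf' hs (meanDist (fun x => p x * g x) s) := by
  obtain ⟨a, ha, hmin⟩ := exists_mem_eq_inf' hs (meanDist (fun x => p x * g x) s)
  rw [hmin]
  exact (inf'_le _ ha).trans (meanDist_le_mul_meanDist_mul hp hg hK a)

end MeanDist

theorem stmt5_general
    (X : Finset Pt)
    (pr : Pt → ℝ) (hprpos : ∀ x ∈ X, 0 < pr x)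
    (f : Pt → Pt → ℝ)  -- `f x' x` denotes f(x' | x)
    (hfpos : ∀ x ∈ X, ∀ x' ∈ X, 0 < f x' x)
    (Φ : Pt → Finset Pt)
    (hne : ∀ y ∈ X, (Φ y).Nonempty)
    (hsub : ∀ y ∈ X, Φ y ⊆ X)
    (ε Em : ℝ)
    (hDP : ∀ y ∈ X, ∀ a ∈ Φ y, ∀ b ∈ Φ y, ∀ x' ∈ X, f x' a ≤ Real.exp ε * f x' b)
    (hE : ∀ y (hy : y ∈ X), Real.exp ε * Em ≤
      (Φ y).inf' (hne y hy) (fun xh => ∑ x ∈ Φ y, (pr x / ∑ z ∈ Φ y, pr z) * dist xh x))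
    (x' : Pt) (hx' : x' ∈ X)
    (post : Pt → ℝ)  -- `post x` denotes the posterior Pr(x | x')
    (hpost : ∀ x, post x = pr x * f x' x / ∑ y ∈ X, pr y * f x' y)
    :
    Em ≤ ⨅ y : X, (Φ y.1).inf' (hne y.1 y.2)
        (fun xh => ∑ x ∈ Φ y.1, (post x / ∑ z ∈ Φ y.1, post z) * dist xh x) := by
  have : Nonempty X := ⟨⟨x', hx'⟩⟩
  refine le_ciInf fun ⟨y, hy⟩ => ?_
  have hevidence : 0 < ∑ z ∈ X, pr z * f x' z :=
    sum_pos (fun z hz => mul_pos (hprpos z hz) (hfpos z hz x' hx')) ⟨x', hx'⟩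
  have hpost_eq : post = fun x => (∑ z ∈ X, pr z * f x' z)⁻¹ * (pr x * f x' x) := by
    funext x
    rw [hpost, div_eq_inv_mul]
  have hcompare := inf'_meanDist_le_mul_inf'_meanDist_mul (hne y hy) (g := f x')
    (fun z hz => hprpos z (hsub y hy hz)) (fun z hz => hfpos z (hsub y hy hz) x' hx')
    (fun a ha b hb => hDP y hy a ha b hb x' hx')
  change Em ≤ (Φ y).inf' (hne y hy) (meanDist post (Φ y))
  simp only [hpost_eq, meanDist_const_mul _ _ _ (inv_ne_zero hevidence.ne')]
  exact le_of_mul_le_mul_left ((hE y hy).trans hcompare) (Real.exp_pos ε)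

/-- if each location `y ∈ X` is assigned a nonempty PLS `Φ y ∋ y` (possibly
intersecting), `f` satisfies `ε`-DP on each `Φ y` and `E(Φ y) ≥ e^ε · Em` for every `y ∈ X`,
then for every observed `x'`, `min_{y ∈ X} PivEr(Φ y, x') ≥ Em`. -/
theorem stmt5
    (X : Finset Pt) (hX : X.Nonempty)
    (pr : Pt → ℝ) (hprpos : ∀ x ∈ X, 0 < pr x) (hprsum : ∑ x ∈ X, pr x = 1)
    (f : Pt → Pt → ℝ)  -- `f x' x` denotes f(x' | x)
    (hfpos : ∀ x ∈ X, ∀ x' ∈ X, 0 < f x' x)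
    (hfsum : ∀ x ∈ X, ∑ x' ∈ X, f x' x = 1)
    (Φ : Pt → Finset Pt)
    (hne : ∀ y ∈ X, (Φ y).Nonempty)
    (hmem : ∀ y ∈ X, y ∈ Φ y)
    (hsub : ∀ y ∈ X, Φ y ⊆ X)
    (ε Em : ℝ) (hε : 0 < ε) (hEm : 0 < Em)
    (hDP : ∀ y ∈ X, ∀ a ∈ Φ y, ∀ b ∈ Φ y, ∀ x' ∈ X, f x' a ≤ Real.exp ε * f x' b)
    (hE : ∀ y (hy : y ∈ X), Real.exp ε * Em ≤
      (Φ y).inf' (hne y hy) (fun xh => ∑ x ∈ Φ y, (pr x / ∑ z ∈ Φ y, pr z) * dist xh x))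
    (x' : Pt) (hx' : x' ∈ X)
    (post : Pt → ℝ)  -- `post x` denotes the posterior Pr(x | x')
    (hpost : ∀ x, post x = pr x * f x' x / ∑ y ∈ X, pr y * f x' y)
    :
    Em ≤ ⨅ y : X, (Φ y.1).inf' (hne y.1 y.2)
        (fun xh => ∑ x ∈ Φ y.1, (post x / ∑ z ∈ Φ y.1, post z) * dist xh x) :=
  stmt5_general X pr hprpos f hfpos Φ hne hsub ε Em hDP hE x' hx' post hpost
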